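/- arXiv:1408.1210 — 4 statements merged into one kernel-verified Lean document; each statement's English description precedes it below -/
import Mathlib

section
/- For integers e ≥ 3 odd and 0 ≤ t ≤ (e−1)/2, the partition μ_{t,e} := (t, t−1, ..., 3, 2, 1^{e+1}) (i.e., the parts t, t−1, ..., 2 followed by e+1 parts equal to 1; interpreted as (1^e) when t = 0 and (1^{e+1}) when t = 1) has e-core equal to the staircase partition Δ_t and e-weight equal to 1. -/
/-!
A partition is encoded by its β-set: with `c` beads, part `λ_j` sits at position
`λ_j + (c - 1 - j)`, and removing an `e`-hook moves one bead down by `e`. With `k` beads, the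
β-set of `μ_{t,e}` is that of `Δ_t` with the bead at `k - t - e` moved up to `k - t`; moving it
back is an `e`-hook removal. The β-set of `Δ_t` is an initial segment `[0, k - t)` followed by
the alternating positions `k - t + 1, k - t + 3, …, k + t - 1`; since `2t < e`, each bead at
position `≥ e` has its `e`-predecessor in the initial segment, so `Δ_t` is an `e`-core.
-/

/-- The partition associated to a β-set `B = {b₁ > b₂ > ⋯ > b_k} ⊆ ℕ`: its `j`-th part
(0-indexed) is `b_{j+1} − (k − 1 − j)`. -/
def betaToPart (B : Finset ℕ) (j : ℕ) : ℕ :=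
  if j < B.card then (B.sort (· ≤ ·)).getD (B.card - 1 - j) 0 - (B.card - 1 - j) else 0

/-- Removing an `e`-hook from the partition with β-set `B`: replace an element
`y ∈ B` with `y ≥ e` and `y − e ∉ B` by `y − e`. -/
def hookRel (e : ℕ) (B B' : Finset ℕ) : Prop :=
  ∃ y ∈ B, e ≤ y ∧ y - e ∉ B ∧ B' = insert (y - e) (B.erase y)

/-- A β-set has no removable `e`-hook. -/
def NoEHook (e : ℕ) (C : Finset ℕ) : Prop := ∀ y ∈ C, e ≤ y → y - e ∈ C

/-- The staircase partition `Δ_t = (t, t−1, ..., 1)`, as a function. -/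
def stair (t : ℕ) : ℕ → ℕ := fun j => t - j

/-- The partition with β-set `B` has `e`-core equal to `core`: some sequence of
`e`-hook removals starting from `B` reaches a β-set with no `e`-hook whose associated
partition is `core`. -/
def HasECore (e : ℕ) (B : Finset ℕ) (core : ℕ → ℕ) : Prop :=
  ∃ C : Finset ℕ, Relation.ReflTransGen (hookRel e) B C ∧ NoEHook e C ∧ betaToPart C = core


/-- The partition `μ_{t,e} = (t, t−1, ..., 3, 2, 1^{e+1})` (interpreted as `(1^e)` for
`t = 0` and `(1^{e+1})` for `t = 1`), as a function giving its `j`-th part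
(0-indexed). -/
def muPart (t e : ℕ) : ℕ → ℕ := fun j =>
  if j + 2 ≤ t then t - j
  else if j < (t - 1) + (if t = 0 then e else e + 1) then 1 else 0

open Finset

def betaSet (c : ℕ) (lam : ℕ → ℕ) : Finset ℕ :=
  (range c).image fun j => lam j + (c - 1 - j)

lemma mem_betaSet {c x : ℕ} {lam : ℕ → ℕ} :
    x ∈ betaSet c lam ↔ ∃ j < c, lam j + (c - 1 - j) = x := by
  simp [betaSet]

lemma List.SortedLT.le_getElem {l : List ℕ} (hl : l.SortedLT) (i : ℕ) (hi : i < l.length) :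
    i ≤ l[i] := by
  induction i with
  | zero => exact Nat.zero_le _
  | succ i ih =>
    have := hl.getElem_lt_getElem_of_lt (hi := by omega) (hj := hi) (Nat.lt_succ_self i)
    have := ih (by omega)
    omega

lemma lt_card_of_betaToPart_ne_zero {B : Finset ℕ} {j : ℕ} (h : betaToPart B j ≠ 0) :
    j < B.card := by
  by_contra hj
  exact h (if_neg hj)

lemma betaToPart_add_eq_getElem_sort {B : Finset ℕ} {j : ℕ} (hj : j < B.card) :
    betaToPart B j + (B.card - 1 - j) = B.sort[B.card - 1 - j]'(by simp; omega) := by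
  have := B.sortedLT_sort.le_getElem (B.card - 1 - j) (by simp; omega)
  rw [betaToPart, if_pos hj, List.getD_eq_getElem _ _ (by simp; omega)]
  omega

theorem betaSet_card_betaToPart (B : Finset ℕ) : betaSet B.card (betaToPart B) = B := by
  ext x
  rw [mem_betaSet, ← Finset.mem_sort (· ≤ ·), List.mem_iff_getElem]
  constructor
  · rintro ⟨j, hj, rfl⟩
    exact ⟨_, _, (betaToPart_add_eq_getElem_sort hj).symm⟩
  · rintro ⟨i, hi, rfl⟩
    rw [length_sort] at hi
    refine ⟨B.card - 1 - i, by omega, ?_⟩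
    rw [betaToPart_add_eq_getElem_sort (by omega)]
    congr 1
    omega

theorem betaToPart_betaSet {c : ℕ} {lam : ℕ → ℕ} (hlam : Antitone lam)
    (hc : ∀ j, c ≤ j → lam j = 0) : betaToPart (betaSet c lam) = lam := by
  set g : Fin c → ℕ := fun i => lam (c - 1 - i) + i
  have hg : StrictMono g := fun i i' h => by
    have := hlam (show c - 1 - i' ≤ c - 1 - i by omega)
    simp only [g]
    omega
  have hsort : (betaSet c lam).sort = List.ofFn g := by
    refine (sortedLT_sort _).eq_of_mem_iff (List.sortedLT_ofFn_iff.mpr hg) fun x => ?_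
    rw [mem_sort, mem_betaSet, List.mem_ofFn']
    constructor
    · rintro ⟨j, hj, rfl⟩
      refine ⟨⟨c - 1 - j, by omega⟩, ?_⟩
      simp only [g, show c - 1 - (c - 1 - j) = j by omega]
    · rintro ⟨i, rfl⟩
      exact ⟨c - 1 - i, by omega, by simp only [g, show c - 1 - (c - 1 - i) = (i : ℕ) by omega]⟩
  have hcard : (betaSet c lam).card = c := by
    rw [← length_sort (· ≤ ·), hsort, List.length_ofFn]
  funext j
  rw [betaToPart, hcard, hsort]
  split_ifs with hj
  · rw [List.getD_eq_getElem _ _ (by simp; omega), List.getElem_ofFn]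
    simp only [g, show c - 1 - (c - 1 - j) = j by omega, Nat.add_sub_cancel]
  · exact (hc j (by omega)).symm

lemma muPart_apply (t e j : ℕ) :
    muPart t e j = if j + 2 ≤ t then t - j else if j < t + e then 1 else 0 := by
  simp only [muPart]
  split_ifs <;> omega

lemma mem_betaSet_stair {k t x : ℕ} (hk : t ≤ k) :
    x ∈ betaSet k (stair t) ↔
      x + t < k ∨ (k < x + t ∧ x < k + t ∧ (x + k + t) % 2 = 1) := by
  rw [mem_betaSet]
  simp only [stair]
  constructor
  · rintro ⟨j, hj, rfl⟩
    omega
  · rintro (hx | hx)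
    · exact ⟨k - 1 - x, by omega, by omega⟩
    · exact ⟨(k + t - 1 - x) / 2, by omega, by omega⟩

lemma mem_betaSet_muPart {k t e x : ℕ} (hk : t + e ≤ k) :
    x ∈ betaSet k (muPart t e) ↔
      x + t + e < k ∨ (k < x + t + e ∧ x + t ≤ k) ∨
        (k < x + t ∧ x < k + t ∧ (x + k + t) % 2 = 1) := by
  simp only [mem_betaSet, muPart_apply]
  constructor
  · rintro ⟨j, hj, rfl⟩
    split_ifs <;> omega
  · rintro (hx | hx | hx)
    · exact ⟨k - 1 - x, by omega, by split_ifs <;> omega⟩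
    · exact ⟨k - x, by omega, by split_ifs <;> omega⟩
    · exact ⟨(k + t - 1 - x) / 2, by omega, by split_ifs <;> omega⟩

lemma hookRel_betaSet_muPart_stair {k t e : ℕ} (he : 0 < e) (hk : t + e ≤ k) :
    hookRel e (betaSet k (muPart t e)) (betaSet k (stair t)) := by
  refine ⟨k - t, by rw [mem_betaSet_muPart hk]; omega, by omega,
    by rw [mem_betaSet_muPart hk]; omega, ?_⟩
  ext x
  simp only [mem_insert, mem_erase, mem_betaSet_muPart hk, mem_betaSet_stair (by omega : t ≤ k)]
  omega

lemma noEHook_betaSet_stair {k t e : ℕ} (hte : 2 * t < e) (hk : t ≤ k) :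
    NoEHook e (betaSet k (stair t)) := by
  intro y hy hey
  rw [mem_betaSet_stair hk] at hy ⊢
  omega

lemma betaToPart_betaSet_stair {k t : ℕ} (hk : t ≤ k) :
    betaToPart (betaSet k (stair t)) = stair t :=
  betaToPart_betaSet (fun _ _ h => Nat.sub_le_sub_left h t) fun j hj => by simp only [stair]; omega

theorem stmt9_general (e t : ℕ) (he3 : 3 ≤ e) (ht : t ≤ (e - 1) / 2)
    (B : Finset ℕ) (hB : betaToPart B = muPart t e) :
    ∃ C : Finset ℕ, hookRel e B C ∧ NoEHook e C ∧ betaToPart C = stair t := by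
  have hte : 2 * t < e := by omega
  have hk : t + e ≤ B.card := by
    have : betaToPart B (t + e - 1) ≠ 0 := by rw [hB, muPart_apply]; split_ifs <;> omega
    have := lt_card_of_betaToPart_ne_zero this
    omega
  have hBeta : B = betaSet B.card (muPart t e) := by rw [← hB, betaSet_card_betaToPart]
  refine ⟨betaSet B.card (stair t), ?_, noEHook_betaSet_stair hte (by omega),
    betaToPart_betaSet_stair (by omega)⟩
  nth_rewrite 1 [hBeta]
  exact hookRel_betaSet_muPart_stair (by omega) hk

/-- For `e ≥ 3` odd and `0 ≤ t ≤ (e−1)/2`, the partition `μ_{t,e}` has `e`-core the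
staircase `Δ_t` and `e`-weight `1`: removing a single `e`-hook from it yields a
partition with no `e`-hook, equal to `Δ_t`. -/
theorem stmt9 (e t : ℕ) (he : Odd e) (he3 : 3 ≤ e) (ht : t ≤ (e - 1) / 2)
    (B : Finset ℕ) (hB : betaToPart B = muPart t e) :
    ∃ C : Finset ℕ, hookRel e B C ∧ NoEHook e C ∧ betaToPart C = stair t :=
  stmt9_general e t he3 ht B hB
end

section
/- Let e ≥ 2 and let 𝔅 = (𝔅¹, 𝔅²) be a pair of 1-runner abaci that is totally e-periodic. Suppose 𝔅¹ ⊆ 𝔅² and there is m ∈ ℤ such that for every j ∈ 𝔅² with j ≥ m one has j − e ∈ 𝔅¹. Then for k = 1, 2 and every j ∈ 𝔅^k with j ≥ m − e + 1, one has j − 1 ∈ 𝔅^k. -/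
/-- A *1-runner abacus* is a subset `𝔄 ⊆ ℤ` such that for some positive integer `n`,
`−j ∈ 𝔄` and `j ∉ 𝔄` for all `j ≥ n`. -/
def IsAbacus (A : Set ℤ) : Prop :=
  ∃ n : ℕ, 0 < n ∧ ∀ j : ℤ, (n : ℤ) ≤ j → (-j ∈ A ∧ j ∉ A)

/-- A symbol `(B1, B2)` (a pair of 1-runner abaci, given as subsets of `ℤ`) is
*totally `e`-periodic* if successively removing `e`-periods terminates in the symbol
of the empty bipartition (whose rows are of the form `{x : x ≤ c}`). An `e`-period
consists of the `e` consecutive values `M, M−1, ..., M−e+1`, where `M` is the largest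
entry of `B1 ∪ B2`, each value read in the first row whenever it lies there, and the
row indices being non-increasing along the period (entries read in the first row come
after those read in the second). Removing the period deletes from `B1` all its values
lying in `(M−e, M]`, and from `B2` those values in `(M−e, M]` not lying in `B1`. -/
inductive TotallyPeriodic (e : ℕ) : Set ℤ → Set ℤ → Prop
  | base (c1 c2 : ℤ) : TotallyPeriodic e {x | x ≤ c1} {x | x ≤ c2}
  | step (B1 B2 : Set ℤ) (M : ℤ)
      (hM : M ∈ B1 ∪ B2) (hub : ∀ x ∈ B1 ∪ B2, x ≤ M)
      (hper : ∀ l : ℕ, l < e → (M - l) ∈ B1 ∪ B2)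
      (hrow : ∀ l l' : ℕ, l < l' → l' < e → (M - l) ∈ B1 → (M - l') ∈ B1)
      (ih : TotallyPeriodic e (B1 \ Set.Ioc (M - e) M) (B2 \ (Set.Ioc (M - e) M \ B1))) :
      TotallyPeriodic e B1 B2


theorem stmt16_aux (e : ℕ) (m : ℤ) (B1 B2 : Set ℤ) (htp : TotallyPeriodic e B1 B2) :
    B1 ⊆ B2 → (∀ j ∈ B2, m ≤ j → j - (e : ℤ) ∈ B1) →
    (∀ j ∈ B1, m - (e : ℤ) + 1 ≤ j → j - 1 ∈ B1) ∧
      (∀ j ∈ B2, m - (e : ℤ) + 1 ≤ j → j - 1 ∈ B2) := by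
  induction htp with
  | base c1 c2 =>
    intro _ _
    constructor <;> · intro j hj hmj; simp only [Set.mem_setOf_eq] at hj ⊢; omega
  | step B1 B2 M hM hub hper hrow ih IH =>
    intro hsub hm
    have hMB2 : M ∈ B2 := hM.elim (fun h => hsub h) id
    have hsub' : B1 \ Set.Ioc (M - e) M ⊆ B2 \ (Set.Ioc (M - e) M \ B1) :=
      fun x hx => ⟨hsub hx.1, fun h => h.2 hx.1⟩
    have hm' : ∀ j ∈ B2 \ (Set.Ioc (M - e) M \ B1), m ≤ j →
        j - (e : ℤ) ∈ B1 \ Set.Ioc (M - e) M := by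
      intro j hj hmj
      refine ⟨hm j hj.1 hmj, ?_⟩
      have hjM : j ≤ M := hub j (Or.inr hj.1)
      intro hc
      rw [Set.mem_Ioc] at hc
      omega
    have IH' := IH hsub' hm'
    constructor
    · intro j hjB1 hmj
      by_cases hIoc : j ∈ Set.Ioc (M - (e : ℤ)) M
      · rw [Set.mem_Ioc] at hIoc
        by_cases hbot : j = M - e + 1
        · have hMe : M - (e : ℤ) ∈ B1 := hm M hMB2 (by omega)
          have : j - 1 = M - (e : ℤ) := by omega
          rw [this]; exact hMe
        · have hl : ((M - j).toNat : ℤ) = M - j := Int.toNat_of_nonneg (by omega)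
          have h1 := hrow (M - j).toNat ((M - j).toNat + 1) (by omega) (by omega)
          have h2 : M - ((M - j).toNat : ℤ) = j := by omega
          rw [h2] at h1
          have h3 : M - (((M - j).toNat + 1 : ℕ) : ℤ) = j - 1 := by push_cast; omega
          rw [h3] at h1
          exact h1 hjB1
      · exact (IH'.1 j ⟨hjB1, hIoc⟩ hmj).1
    · intro j hjB2 hmj
      by_cases hIoc : j ∈ Set.Ioc (M - (e : ℤ)) M \ B1
      · obtain ⟨hIoc', hnB1⟩ := hIoc
        rw [Set.mem_Ioc] at hIoc'
        by_cases hbot : j = M - e + 1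
        · have hMe : M - (e : ℤ) ∈ B1 := hm M hMB2 (by omega)
          have : j - 1 = M - (e : ℤ) := by omega
          rw [this]; exact hsub hMe
        · have hl : ((M - j).toNat : ℤ) = M - j := Int.toNat_of_nonneg (by omega)
          have h1 := hper ((M - j).toNat + 1) (by omega)
          have h3 : M - (((M - j).toNat + 1 : ℕ) : ℤ) = j - 1 := by push_cast; omega
          rw [h3] at h1
          exact h1.elim (fun h => hsub h) id
      · exact (IH'.2 j ⟨hjB2, hIoc⟩ hmj).1

/-- Let `e ≥ 2` and let `(B1, B2)` be a totally `e`-periodic symbol with `B1 ⊆ B2`,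
and suppose `m` is such that `j − e ∈ B1` for every `j ∈ B2` with `j ≥ m`. Then for
each row `B_k` and every `j ∈ B_k` with `j ≥ m − e + 1`, also `j − 1 ∈ B_k`. -/
theorem stmt16 (e : ℕ) (he : 2 ≤ e) (B1 B2 : Set ℤ)
    (hB1 : IsAbacus B1) (hB2 : IsAbacus B2)
    (htp : TotallyPeriodic e B1 B2) (hsub : B1 ⊆ B2) (m : ℤ)
    (hm : ∀ j ∈ B2, m ≤ j → j - (e : ℤ) ∈ B1) :
    (∀ j ∈ B1, m - (e : ℤ) + 1 ≤ j → j - 1 ∈ B1) ∧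
      (∀ j ∈ B2, m - (e : ℤ) + 1 ≤ j → j - 1 ∈ B2) := by
  exact stmt16_aux e m B1 B2 htp hsub hm
end

section
/- Let e ≥ 3 be odd, t ∈ {0, 1}, m ≥ 0, and set c = (t + (1−e)/2, 0). Let 𝔅 be the symbol of the charged bipartition |(−, 1^m), c⟩, i.e., 𝔅¹ = {c_1 + 1 − j : j ≥ 1} and 𝔅² = {1^m_j − j + 1 : j ≥ 1} where 1^m_j = 1 for j ≤ m and 0 otherwise. Then 𝔅 is totally e-periodic if and only if e divides 2m + t or e divides 2m + t − 1. -/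
/-- The row of the symbol of a charged bipartition determined by a partition `f` and a
charge `c`: the 1-runner abacus `{f_j − j + c + 1 : j ≥ 1}` (here `f` is 0-indexed). -/
def symbolRow (f : ℕ → ℕ) (c : ℤ) : Set ℤ :=
  {x | ∃ j : ℕ, x = (f j : ℤ) - ((j : ℤ) + 1) + c + 1}

/-- The second row of the symbol of `(−, 1^m)`: a down-set with one hole at `b+1`. -/
def DSet (b s : ℤ) : Set ℤ := {x | x ≤ b ∨ (b + 2 ≤ x ∧ x ≤ s)}

lemma tp_suff (e : ℕ) (he : 0 < e) :
    ∀ N : ℕ, ∀ a b s : ℤ, b + 2 ≤ s →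
      (s - b - 1).toNat + (a - b - 1).toNat ≤ N →
      ((b + 1 ≤ a ∧ (e : ℤ) ∣ a - b - 1) ∨ (e : ℤ) ∣ s - b - 1) →
      TotallyPeriodic e {x | x ≤ a} (DSet b s) := by
  intro N
  induction N with
  | zero => intro a b s hbs hN _; exfalso; omega
  | succ N IH =>
    intro a b s hbs hN hcond
    have hcov : b + 1 ≤ a ∨ b + 1 ≤ s - e := by
      rcases hcond with ⟨h1, _⟩ | h2
      · exact Or.inl h1
      · have := Int.le_of_dvd (by omega) h2; omega
    rcases le_or_gt s a with has | has
    · refine TotallyPeriodic.step _ _ a ?_ ?_ ?_ ?_ ?_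
      · simp only [Set.mem_union, Set.mem_setOf_eq, DSet]; omega
      · intro x hx
        simp only [Set.mem_union, Set.mem_setOf_eq, DSet] at hx
        omega
      · intro l hl
        simp only [Set.mem_union, Set.mem_setOf_eq, DSet]
        omega
      · intro l l' h1 h2 h3
        simp only [Set.mem_setOf_eq] at h3 ⊢
        omega
      · have e1 : {x : ℤ | x ≤ a} \ Set.Ioc (a - (e : ℤ)) a = {x : ℤ | x ≤ a - (e : ℤ)} := by
          ext x; simp only [Set.mem_diff, Set.mem_setOf_eq, Set.mem_Ioc]; omega
        have e2 : DSet b s \ (Set.Ioc (a - (e : ℤ)) a \ {x : ℤ | x ≤ a}) = DSet b s := by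
          ext x
          simp only [DSet, Set.mem_diff, Set.mem_setOf_eq, Set.mem_Ioc]
          omega
        rw [e1, e2]
        refine IH (a - e) b s hbs (by omega) ?_
        rcases hcond with ⟨h1, hd⟩ | h2
        · have := Int.le_of_dvd (by omega) hd
          refine Or.inl ⟨by omega, ?_⟩
          rw [show a - (e : ℤ) - b - 1 = (a - b - 1) - (e : ℤ) by ring]
          exact dvd_sub hd dvd_rfl
        · exact Or.inr h2
    · refine TotallyPeriodic.step _ _ s ?_ ?_ ?_ ?_ ?_
      · simp only [Set.mem_union, Set.mem_setOf_eq, DSet]; omega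
      · intro x hx
        simp only [Set.mem_union, Set.mem_setOf_eq, DSet] at hx
        omega
      · intro l hl
        simp only [Set.mem_union, Set.mem_setOf_eq, DSet]
        omega
      · intro l l' h1 h2 h3
        simp only [Set.mem_setOf_eq] at h3 ⊢
        omega
      · rcases le_or_gt a (s - e) with hle | hgt
        · have e1 : {x : ℤ | x ≤ a} \ Set.Ioc (s - (e : ℤ)) s = {x : ℤ | x ≤ a} := by
            ext x; simp only [Set.mem_diff, Set.mem_setOf_eq, Set.mem_Ioc]; omega
          rcases le_or_gt (b + 2) (s - e) with hq | hq
          · have e2 : DSet b s \ (Set.Ioc (s - (e : ℤ)) s \ {x : ℤ | x ≤ a}) = DSet b (s - e) := by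
              ext x
              simp only [DSet, Set.mem_diff, Set.mem_setOf_eq, Set.mem_Ioc]
              omega
            rw [e1, e2]
            refine IH a b (s - e) hq (by omega) ?_
            rcases hcond with ⟨h1, hd⟩ | h2
            · exact Or.inl ⟨h1, hd⟩
            · refine Or.inr ?_
              rw [show s - (e : ℤ) - b - 1 = (s - b - 1) - (e : ℤ) by ring]
              exact dvd_sub h2 dvd_rfl
          · have e2 : DSet b s \ (Set.Ioc (s - (e : ℤ)) s \ {x : ℤ | x ≤ a}) =
                {x : ℤ | x ≤ min b (s - (e : ℤ))} := by
              ext x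
              simp only [DSet, Set.mem_diff, Set.mem_setOf_eq, Set.mem_Ioc]
              omega
            rw [e1, e2]
            exact TotallyPeriodic.base a (min b (s - (e : ℤ)))
        · have e1 : {x : ℤ | x ≤ a} \ Set.Ioc (s - (e : ℤ)) s = {x : ℤ | x ≤ s - (e : ℤ)} := by
            ext x; simp only [Set.mem_diff, Set.mem_setOf_eq, Set.mem_Ioc]; omega
          rcases le_or_gt (b + 2) a with hq | hq
          · have e2 : DSet b s \ (Set.Ioc (s - (e : ℤ)) s \ {x : ℤ | x ≤ a}) = DSet b a := by
              ext x
              simp only [DSet, Set.mem_diff, Set.mem_setOf_eq, Set.mem_Ioc]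
              omega
            rw [e1, e2]
            refine IH (s - e) b a hq (by omega) ?_
            rcases hcond with ⟨h1, hd⟩ | h2
            · exact Or.inr hd
            · have := Int.le_of_dvd (by omega) h2
              refine Or.inl ⟨by omega, ?_⟩
              rw [show s - (e : ℤ) - b - 1 = (s - b - 1) - (e : ℤ) by ring]
              exact dvd_sub h2 dvd_rfl
          · have e2 : DSet b s \ (Set.Ioc (s - (e : ℤ)) s \ {x : ℤ | x ≤ a}) =
                {x : ℤ | x ≤ min b a} := by
              ext x
              simp only [DSet, Set.mem_diff, Set.mem_setOf_eq, Set.mem_Ioc]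
              omega
            rw [e1, e2]
            exact TotallyPeriodic.base (s - (e : ℤ)) (min b a)

lemma tp_nec (e : ℕ) {B1 B2 : Set ℤ} (h : TotallyPeriodic e B1 B2) :
    ∀ a b s : ℤ, b + 2 ≤ s → B1 = {x | x ≤ a} → B2 = DSet b s →
      ((b + 1 ≤ a ∧ (e : ℤ) ∣ a - b - 1) ∨ (e : ℤ) ∣ s - b - 1) := by
  induction h with
  | base c1 c2 =>
    intro a b s hbs h1 h2
    exfalso
    have hA := Set.ext_iff.mp h2 s
    have hB := Set.ext_iff.mp h2 (b + 1)
    simp only [DSet, Set.mem_setOf_eq] at hA hB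
    omega
  | step B1 B2 M hM hub hper hrow ih IH =>
    intro a b s hbs h1 h2
    subst h1; subst h2
    simp only [Set.mem_union, Set.mem_setOf_eq, DSet] at hM
    have hsM : s ≤ M := hub s (by simp only [Set.mem_union, Set.mem_setOf_eq, DSet]; omega)
    have haM : a ≤ M := hub a (by simp only [Set.mem_union, Set.mem_setOf_eq, DSet]; omega)
    have hcov : b + 1 ≤ a ∨ b + 1 ≤ M - e := by
      rcases le_or_gt (b + 1) (M - e) with hc | hc
      · exact Or.inr hc
      · left
        have hlt : (M - (b + 1)).toNat < e := by omega
        have hp := hper _ hlt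
        rw [show M - ((M - (b + 1)).toNat : ℤ) = b + 1 by omega] at hp
        simp only [Set.mem_union, Set.mem_setOf_eq, DSet] at hp
        omega
    rcases le_or_gt s a with has | has
    · obtain rfl : M = a := by omega
      have e1 : {x : ℤ | x ≤ M} \ Set.Ioc (M - (e : ℤ)) M = {x : ℤ | x ≤ M - (e : ℤ)} := by
        ext x; simp only [Set.mem_diff, Set.mem_setOf_eq, Set.mem_Ioc]; omega
      have e2 : DSet b s \ (Set.Ioc (M - (e : ℤ)) M \ {x : ℤ | x ≤ M}) = DSet b s := by
        ext x
        simp only [DSet, Set.mem_diff, Set.mem_setOf_eq, Set.mem_Ioc]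
        omega
      rcases IH (M - e) b s hbs e1 e2 with ⟨h1, hd⟩ | h2
      · refine Or.inl ⟨by omega, ?_⟩
        rw [show M - b - 1 = (M - (e : ℤ) - b - 1) + (e : ℤ) by ring]
        exact dvd_add hd dvd_rfl
      · exact Or.inr h2
    · obtain rfl : M = s := by omega
      rcases le_or_gt a (M - e) with hle | hgt
      · rcases le_or_gt (b + 2) (M - e) with hq | hq
        · have e1 : {x : ℤ | x ≤ a} \ Set.Ioc (M - (e : ℤ)) M = {x : ℤ | x ≤ a} := by
            ext x; simp only [Set.mem_diff, Set.mem_setOf_eq, Set.mem_Ioc]; omega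
          have e2 : DSet b M \ (Set.Ioc (M - (e : ℤ)) M \ {x : ℤ | x ≤ a}) = DSet b (M - e) := by
            ext x
            simp only [DSet, Set.mem_diff, Set.mem_setOf_eq, Set.mem_Ioc]
            omega
          rcases IH a b (M - e) hq e1 e2 with ⟨h1, hd⟩ | h2
          · exact Or.inl ⟨h1, hd⟩
          · refine Or.inr ?_
            rw [show M - b - 1 = (M - (e : ℤ) - b - 1) + (e : ℤ) by ring]
            exact dvd_add h2 dvd_rfl
        · rcases hcov with hc | hc
          · refine Or.inl ⟨hc, ?_⟩
            rw [show a - b - 1 = 0 by omega]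
            exact dvd_zero _
          · exact Or.inr ⟨1, by omega⟩
      · rcases le_or_gt (b + 2) a with hq | hq
        · have e1 : {x : ℤ | x ≤ a} \ Set.Ioc (M - (e : ℤ)) M = {x : ℤ | x ≤ M - (e : ℤ)} := by
            ext x; simp only [Set.mem_diff, Set.mem_setOf_eq, Set.mem_Ioc]; omega
          have e2 : DSet b M \ (Set.Ioc (M - (e : ℤ)) M \ {x : ℤ | x ≤ a}) = DSet b a := by
            ext x
            simp only [DSet, Set.mem_diff, Set.mem_setOf_eq, Set.mem_Ioc]
            omega
          rcases IH (M - e) b a hq e1 e2 with ⟨h1, hd⟩ | h2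
          · refine Or.inr ?_
            rw [show M - b - 1 = (M - (e : ℤ) - b - 1) + (e : ℤ) by ring]
            exact dvd_add hd dvd_rfl
          · exact Or.inl ⟨by omega, h2⟩
        · refine Or.inl ⟨by omega, ?_⟩
          rw [show a - b - 1 = 0 by omega]
          exact dvd_zero _

lemma tp_arith (e k m t : ℕ) (hk : 1 ≤ k) (hm : 1 ≤ m) (ht : t ≤ 1)
    (hE : (e : ℤ) = 2 * (k : ℤ) + 1) :
    ((-(m : ℤ) + 1 ≤ (t : ℤ) - (k : ℤ) ∧ (e : ℤ) ∣ (t : ℤ) - (k : ℤ) - -(m : ℤ) - 1) ∨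
        (e : ℤ) ∣ 1 - -(m : ℤ) - 1) ↔
      ((e : ℤ) ∣ 2 * (m : ℤ) + (t : ℤ) ∨ (e : ℤ) ∣ 2 * (m : ℤ) + (t : ℤ) - 1) := by
  have hdb : ∀ x : ℤ, ((e : ℤ) ∣ 2 * x ↔ (e : ℤ) ∣ x) := by
    intro x
    constructor
    · rintro ⟨c, hc⟩
      rw [hE] at hc
      exact ⟨((k : ℤ) + 1) * c - x, by rw [hE]; linear_combination ((k : ℤ) + 1) * hc⟩
    · exact fun h => h.mul_left 2
  have hsh : ∀ x y : ℤ, x - y = (e : ℤ) → ((e : ℤ) ∣ x ↔ (e : ℤ) ∣ y) := by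
    intro x y hxy
    constructor
    · intro h
      have h2 := dvd_sub h (dvd_refl (e : ℤ))
      rwa [show x - (e : ℤ) = y by omega] at h2
    · intro h
      have h2 := dvd_add h (dvd_refl (e : ℤ))
      rwa [show y + (e : ℤ) = x by omega] at h2
  have hA : ((e : ℤ) ∣ (t : ℤ) - (k : ℤ) - -(m : ℤ) - 1) ↔
      ((e : ℤ) ∣ 2 * (m : ℤ) + 2 * (t : ℤ) - 1) :=
    ((hdb _).symm).trans
      ((hsh (2 * (m : ℤ) + 2 * (t : ℤ) - 1)
        (2 * ((t : ℤ) - (k : ℤ) - -(m : ℤ) - 1)) (by omega)).symm)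
  have hB : ((e : ℤ) ∣ 1 - -(m : ℤ) - 1) ↔ ((e : ℤ) ∣ 2 * (m : ℤ)) := by
    rw [show (1 : ℤ) - -(m : ℤ) - 1 = (m : ℤ) by ring]
    exact (hdb _).symm
  have hpos : ((e : ℤ) ∣ (t : ℤ) - (k : ℤ) - -(m : ℤ) - 1) →
      -(m : ℤ) + 1 ≤ (t : ℤ) - (k : ℤ) := by
    rintro ⟨c, hc⟩
    have hm' : (1 : ℤ) ≤ (m : ℤ) := by exact_mod_cast hm
    have ht' : (0 : ℤ) ≤ (t : ℤ) := by positivity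
    rcases le_or_gt 0 c with h | h
    · have h0 : (0 : ℤ) ≤ (e : ℤ) * c := mul_nonneg (by omega) h
      linarith [hc]
    · exfalso
      have h1 : c ≤ -1 := by omega
      have h2 : (e : ℤ) * c ≤ (e : ℤ) * (-1) :=
        mul_le_mul_of_nonneg_left h1 (by omega)
      linarith [hc, h2]
  have hCD : ((e : ℤ) ∣ 2 * (m : ℤ) + (t : ℤ) ∨ (e : ℤ) ∣ 2 * (m : ℤ) + (t : ℤ) - 1) ↔
      ((e : ℤ) ∣ 2 * (m : ℤ) ∨ (e : ℤ) ∣ 2 * (m : ℤ) + 2 * (t : ℤ) - 1) := by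
    interval_cases t
    · norm_num
    · constructor
      · rintro (h | h)
        · right
          rwa [show 2 * (m : ℤ) + 2 * ((1 : ℕ) : ℤ) - 1 = 2 * (m : ℤ) + ((1 : ℕ) : ℤ) by push_cast; ring]
        · left
          rwa [show 2 * (m : ℤ) + ((1 : ℕ) : ℤ) - 1 = 2 * (m : ℤ) by push_cast; ring] at h
      · rintro (h | h)
        · right
          rwa [show 2 * (m : ℤ) + ((1 : ℕ) : ℤ) - 1 = 2 * (m : ℤ) by push_cast; ring]
        · left
          rwa [show 2 * (m : ℤ) + 2 * ((1 : ℕ) : ℤ) - 1 = 2 * (m : ℤ) + ((1 : ℕ) : ℤ) by push_cast; ring] at h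
  rw [hCD, hA, hB]
  constructor
  · rintro (⟨_, hd⟩ | hd)
    · exact Or.inr hd
    · exact Or.inl hd
  · rintro (hd | hd)
    · exact Or.inr hd
    · exact Or.inl ⟨hpos (hA.mpr hd), hd⟩

/-- Let `e ≥ 3` be odd, `t ∈ {0, 1}`, `m ≥ 0`, and `c = (t + (1−e)/2, 0)`. The symbol
of the charged bipartition `|(−, 1^m), c⟩` is totally `e`-periodic if and only if
`e` divides `2m + t` or `e` divides `2m + t − 1`. -/
theorem stmt17 (e t m : ℕ) (he : Odd e) (he3 : 3 ≤ e) (ht : t ≤ 1) :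
    TotallyPeriodic e (symbolRow (fun _ => 0) ((t : ℤ) + (1 - (e : ℤ)) / 2))
        (symbolRow (fun j => if j < m then 1 else 0) 0) ↔
      ((e : ℤ) ∣ 2 * m + t ∨ (e : ℤ) ∣ 2 * m + t - 1) := by
  obtain ⟨k, hk⟩ := he
  have hk1 : 1 ≤ k := by omega
  have he0 : 0 < e := by omega
  have hE : (e : ℤ) = 2 * (k : ℤ) + 1 := by omega
  have hc1 : (t : ℤ) + (1 - (e : ℤ)) / 2 = (t : ℤ) - (k : ℤ) := by omega
  have hB1 : symbolRow (fun _ => 0) ((t : ℤ) + (1 - (e : ℤ)) / 2) =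
      {x : ℤ | x ≤ (t : ℤ) - (k : ℤ)} := by
    ext x
    simp only [symbolRow, Set.mem_setOf_eq, hc1]
    constructor
    · rintro ⟨j, rfl⟩; push_cast; omega
    · intro hx
      refine ⟨((t : ℤ) - (k : ℤ) - x).toNat, ?_⟩
      push_cast
      omega
  rcases Nat.eq_zero_or_pos m with hm | hm
  · subst hm
    have hB2 : symbolRow (fun j => if j < 0 then 1 else 0) 0 = {x : ℤ | x ≤ 0} := by
      ext x
      simp only [symbolRow, Set.mem_setOf_eq]
      constructor
      · rintro ⟨j, rfl⟩; simp
      · intro hx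
        refine ⟨(-x).toNat, ?_⟩
        simp
        omega
    rw [hB1, hB2]
    constructor
    · intro _
      interval_cases t
      · left; norm_num
      · right; norm_num
    · intro _
      exact TotallyPeriodic.base _ _
  · have hB2 : symbolRow (fun j => if j < m then 1 else 0) 0 = DSet (-(m : ℤ)) 1 := by
      ext x
      simp only [symbolRow, DSet, Set.mem_setOf_eq]
      constructor
      · rintro ⟨j, rfl⟩
        by_cases hj : j < m
        · simp only [if_pos hj]; push_cast; omega
        · simp only [if_neg hj]; push_cast; omega
      · intro hx
        rcases le_or_gt x (-(m : ℤ)) with h | h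
        · refine ⟨(-x).toNat, ?_⟩
          rw [if_neg (by omega)]
          push_cast
          omega
        · refine ⟨(1 - x).toNat, ?_⟩
          rw [if_pos (by omega)]
          push_cast
          omega
    rw [hB1, hB2]
    have iff1 : TotallyPeriodic e {x : ℤ | x ≤ (t : ℤ) - (k : ℤ)} (DSet (-(m : ℤ)) 1) ↔
        ((-(m : ℤ) + 1 ≤ (t : ℤ) - (k : ℤ) ∧ (e : ℤ) ∣ (t : ℤ) - (k : ℤ) - -(m : ℤ) - 1) ∨
          (e : ℤ) ∣ 1 - -(m : ℤ) - 1) := by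
      constructor
      · intro h
        exact tp_nec e h ((t : ℤ) - (k : ℤ)) (-(m : ℤ)) 1 (by omega) rfl rfl
      · intro hc
        exact tp_suff e he0
          (((1 : ℤ) - -(m : ℤ) - 1).toNat + ((t : ℤ) - (k : ℤ) - -(m : ℤ) - 1).toNat)
          ((t : ℤ) - (k : ℤ)) (-(m : ℤ)) 1 (by omega) le_rfl hc
    rw [iff1]
    exact tp_arith e k m t hk1 hm ht hE
end

section
/- Let e ≥ 3 be odd and t ≥ 0, c = (t + (1−e)/2, 0). Suppose μ is a bipartition such that the symbol 𝔅(μ, c) is totally e-periodic. Then the e-core of the partition Φ_t(μ) is a 2-core, i.e., equals Δ_s for some s ≥ 0. -/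
/-- The `j`-th largest element (0-indexed) of a 1-runner abacus: the unique `x ∈ A`
with exactly `j` elements of `A` above it. -/
noncomputable def abacusBead (A : Set ℤ) (j : ℕ) : ℤ :=
  sSup {x | x ∈ A ∧ {y | y ∈ A ∧ x < y}.ncard = j}

/-- The partition associated to a 1-runner abacus: its `j`-th part (0-indexed) is the
number of holes (integers not in `A`) below the `j`-th largest element of `A`. -/
noncomputable def abacusPartition (A : Set ℤ) (j : ℕ) : ℕ :=
  {y | y < abacusBead A j ∧ y ∉ A}.ncard

/-- The charge of a 1-runner abacus: `a₁ − λ₁`. -/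
noncomputable def abacusCharge (A : Set ℤ) : ℤ :=
  abacusBead A 0 - (abacusPartition A 0 : ℤ)


/-- The 1-runner abacus `𝔄_e(μ, c) = {2j + e : j ∈ 𝔅¹} ∪ {2j : j ∈ 𝔅²}` obtained by
interleaving the two rows of a symbol. -/
def abacusE (e : ℕ) (B1 B2 : Set ℤ) : Set ℤ :=
  {y | ∃ j ∈ B1, y = 2 * j + (e : ℤ)} ∪ {y | ∃ j ∈ B2, y = 2 * j}

/-- `f : ℕ → ℕ` is a partition: weakly decreasing with finite support. -/
def IsPartitionFun (f : ℕ → ℕ) : Prop := Antitone f ∧ ∃ N, ∀ j, N ≤ j → f j = 0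

open Finset

namespace Finset

lemma mem_iff_lt_card_of_succ_mem {S : Finset ℕ} (h : ∀ k, k + 1 ∈ S → k ∈ S) {k : ℕ} :
    k ∈ S ↔ k < #S := by
  have down : ∀ j l, j ≤ l → l ∈ S → j ∈ S := by
    intro j l hjl
    induction l, hjl using Nat.le_induction with
    | base => exact id
    | succ l _ ih => exact fun hl => ih (h l hl)
  constructor
  · intro hk
    calc k < #(range (k + 1)) := by simp
      _ ≤ #S := card_le_card fun j hj => down j k (by simpa [Nat.lt_succ_iff] using hj) hk
  · intro hk
    by_contra hn
    have : S ⊆ range k := fun j hj => mem_range.2 <| by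
      by_contra hjk
      exact hn (down k j (by omega) hj)
    have := card_le_card this
    rw [card_range] at this
    omega

variable {α β : Type*} [LinearOrder α] [LinearOrder β] {k : ℕ}

lemma sort_image_of_strictMono {f : α → β} (hf : StrictMono f) (s : Finset α) :
    (s.image f).sort (· ≤ ·) = (s.sort (· ≤ ·)).map f := by
  have := (hf.strictMonoOn _).map_finsetSort (f := ⟨f, hf.injective⟩) s
  rw [map_eq_image] at this
  exact this.symm

lemma filter_lt_orderEmbOfFin (s : Finset α) (h : #s = k) (i : Fin k) :
    s.filter (· < s.orderEmbOfFin h i) = (Iio i).map (s.orderEmbOfFin h).toEmbedding := by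
  ext c
  simp only [mem_filter, mem_map, mem_Iio, RelEmbedding.coe_toEmbedding]
  constructor
  · rintro ⟨hc, hci⟩
    obtain ⟨j, rfl⟩ : c ∈ Set.range (s.orderEmbOfFin h) := by rwa [range_orderEmbOfFin]
    exact ⟨j, (s.orderEmbOfFin h).lt_iff_lt.1 hci, rfl⟩
  · rintro ⟨j, hj, rfl⟩
    exact ⟨orderEmbOfFin_mem s h j, (s.orderEmbOfFin h).lt_iff_lt.2 hj⟩

lemma filter_gt_orderEmbOfFin (s : Finset α) (h : #s = k) (i : Fin k) :
    s.filter (s.orderEmbOfFin h i < ·) = (Ioi i).map (s.orderEmbOfFin h).toEmbedding := by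
  ext c
  simp only [mem_filter, mem_map, mem_Ioi, RelEmbedding.coe_toEmbedding]
  constructor
  · rintro ⟨hc, hci⟩
    obtain ⟨j, rfl⟩ : c ∈ Set.range (s.orderEmbOfFin h) := by rwa [range_orderEmbOfFin]
    exact ⟨j, (s.orderEmbOfFin h).lt_iff_lt.1 hci, rfl⟩
  · rintro ⟨j, hj, rfl⟩
    exact ⟨orderEmbOfFin_mem s h j, (s.orderEmbOfFin h).lt_iff_lt.2 hj⟩

end Finset

namespace BetaSet

variable {e : ℕ}

section Runners

def runnerCount (e : ℕ) (B : Finset ℕ) (i : ℕ) : ℕ := #(B.filter (· % e = i))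

def coreOfRunnerCounts (e : ℕ) (n : ℕ → ℕ) : Finset ℕ :=
  (range e).biUnion fun i => (range (n i)).image (i + e * ·)

lemma mem_coreOfRunnerCounts (he : 0 < e) {n : ℕ → ℕ} {x : ℕ} :
    x ∈ coreOfRunnerCounts e n ↔ x / e < n (x % e) := by
  simp only [coreOfRunnerCounts, mem_biUnion, mem_range, mem_image]
  constructor
  · rintro ⟨i, hi, k, hk, rfl⟩
    rwa [Nat.add_mul_mod_self_left, Nat.mod_eq_of_lt hi, Nat.add_mul_div_left _ _ he,
      Nat.div_eq_of_lt hi, zero_add]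
  · exact fun h => ⟨x % e, Nat.mod_lt _ he, x / e, h, Nat.mod_add_div x e⟩

lemma coreOfRunnerCounts_congr (he : 0 < e) {n n' : ℕ → ℕ} (h : ∀ i < e, n i = n' i) :
    coreOfRunnerCounts e n = coreOfRunnerCounts e n' := by
  ext x
  rw [mem_coreOfRunnerCounts he, mem_coreOfRunnerCounts he, h _ (Nat.mod_lt _ he)]

lemma noEHook_coreOfRunnerCounts (he : 0 < e) (n : ℕ → ℕ) :
    NoEHook e (coreOfRunnerCounts e n) := by
  intro y hy hey
  rw [mem_coreOfRunnerCounts he] at hy ⊢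
  rw [← Nat.mod_eq_sub_mod hey]
  have := Nat.div_eq_sub_div he hey
  omega

def eCore (e : ℕ) (B : Finset ℕ) : Finset ℕ := coreOfRunnerCounts e (runnerCount e B)

/-- Without `e`-hooks every runner is filled from the bottom, so the runner counts determine `C`. -/
lemma eCore_eq_self (he : 0 < e) {C : Finset ℕ} (hC : NoEHook e C) : eCore e C = C := by
  ext x
  rw [eCore, mem_coreOfRunnerCounts he]
  set S := (C.filter (· % e = x % e)).image (· / e)
  have hcard : #S = runnerCount e C (x % e) :=
    card_image_of_injOn fun a ha b hb hab => by
      simp only [mem_coe, mem_filter] at ha hb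
      rw [← Nat.mod_add_div a e, ← Nat.mod_add_div b e, ha.2, hb.2]
      exact congrArg _ (congrArg _ hab)
  have hS : ∀ k, k ∈ S ↔ x % e + e * k ∈ C := by
    intro k
    simp only [S, mem_image, mem_filter]
    constructor
    · rintro ⟨y, ⟨hy, hmod⟩, rfl⟩
      rwa [← hmod, Nat.mod_add_div]
    · intro hk
      refine ⟨_, ⟨hk, ?_⟩, ?_⟩ <;>
        simp [Nat.add_mul_mod_self_left, Nat.add_mul_div_left _ _ he, Nat.div_eq_of_lt
          (Nat.mod_lt x he)]
  have hdown : ∀ k, k + 1 ∈ S → k ∈ S := by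
    intro k hk
    rw [hS] at hk ⊢
    have := hC _ hk (le_add_left (Nat.le_mul_of_pos_right e k.succ_pos))
    rwa [show x % e + e * (k + 1) - e = x % e + e * k by rw [mul_add]; omega] at this
  rw [← hcard, ← mem_iff_lt_card_of_succ_mem hdown, hS, Nat.mod_add_div]

lemma runnerCount_of_hookRel {B B' : Finset ℕ} (h : hookRel e B B') :
    runnerCount e B' = runnerCount e B := by
  obtain ⟨y, hy, hey, hnot, rfl⟩ := h
  funext i
  have hmod := (Nat.mod_eq_sub_mod hey).symm
  rw [runnerCount, runnerCount, filter_insert, filter_erase]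
  by_cases hi : y % e = i
  · have hyi : y ∈ B.filter (· % e = i) := mem_filter.2 ⟨hy, hi⟩
    rw [if_pos (hmod.trans hi),
      card_insert_of_notMem fun h => hnot (mem_filter.1 (mem_of_mem_erase h)).1,
      card_erase_of_mem hyi, Nat.sub_add_cancel (card_pos.2 ⟨y, hyi⟩)]
  · rw [if_neg (hmod ▸ hi)]
    exact congrArg card (erase_eq_of_notMem fun h => hi (mem_filter.1 h).2)

lemma sum_add_of_hookRel {B B' : Finset ℕ} (h : hookRel e B B') : B'.sum id + e = B.sum id := by
  obtain ⟨y, hy, hey, hnot, rfl⟩ := h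
  rw [sum_insert fun h => hnot (mem_of_mem_erase h), ← sum_erase_add B id hy]
  simp only [id]
  omega

lemma reflTransGen_hookRel_eCore (he : 0 < e) (B : Finset ℕ) :
    Relation.ReflTransGen (hookRel e) B (eCore e B) := by
  induction hs : B.sum id using Nat.strong_induction_on generalizing B with
  | _ n ih =>
    by_cases hB : NoEHook e B
    · rw [eCore_eq_self he hB]
    · simp only [NoEHook, not_forall] at hB
      obtain ⟨y, hy, hey, hnot⟩ := hB
      obtain ⟨B', hstep⟩ : ∃ B', hookRel e B B' := ⟨_, y, hy, hey, hnot, rfl⟩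
      have := sum_add_of_hookRel hstep
      have hrest := ih (B'.sum id) (by omega) B' rfl
      rw [eCore, runnerCount_of_hookRel hstep] at hrest
      exact .head hstep hrest

lemma eCore_eq_of_reflTransGen (he : 0 < e) {B C : Finset ℕ}
    (hBC : Relation.ReflTransGen (hookRel e) B C) (hC : NoEHook e C) : eCore e B = C := by
  have : runnerCount e B = runnerCount e C := by
    clear hC
    induction hBC with
    | refl => rfl
    | tail _ hstep ih => rw [ih, runnerCount_of_hookRel hstep]
  rw [eCore, this]
  exact eCore_eq_self he hC

lemma hasECore_eCore (he : 0 < e) (B : Finset ℕ) : HasECore e B (betaToPart (eCore e B)) :=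
  ⟨_, reflTransGen_hookRel_eCore he B, noEHook_coreOfRunnerCounts he _, rfl⟩

end Runners

section Shift

/-- A β-set of the same partition with one more bead. -/
def betaShift (B : Finset ℕ) : Finset ℕ := insert 0 (B.image (· + 1))

lemma mem_betaShift {B : Finset ℕ} {x : ℕ} : x ∈ betaShift B ↔ x = 0 ∨ 0 < x ∧ x - 1 ∈ B := by
  simp only [betaShift, mem_insert, mem_image]
  constructor
  · rintro (rfl | ⟨b, hb, rfl⟩)
    · exact .inl rfl
    · exact .inr ⟨by omega, by simpa using hb⟩
  · rintro (rfl | ⟨hx, hB⟩)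
    · exact .inl rfl
    · exact .inr ⟨x - 1, hB, by omega⟩

lemma betaToPart_betaShift (B : Finset ℕ) : betaToPart (betaShift B) = betaToPart B := by
  have hcard : #(betaShift B) = #B + 1 := by
    rw [betaShift, card_insert_of_notMem (by simp),
      card_image_of_injective _ (add_left_injective 1)]
  have hsort : (betaShift B).sort (· ≤ ·) = 0 :: (B.sort (· ≤ ·)).map (· + 1) := by
    rw [betaShift, sort_insert _ (fun b _ => Nat.zero_le b) (by simp),
      sort_image_of_strictMono fun a b hab => by omega]
  funext j
  unfold betaToPart
  rw [hcard, hsort]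
  rcases lt_trichotomy j #B with hj | rfl | hj
  · have hlen : #B - 1 - j < (B.sort (· ≤ ·)).length := by rw [length_sort]; omega
    rw [if_pos (by omega), if_pos hj, show #B + 1 - 1 - j = #B - 1 - j + 1 by omega,
      List.getD_cons_succ, List.getD_eq_getElem _ _ (by simpa using hlen),
      List.getD_eq_getElem _ _ hlen, List.getElem_map]
    omega
  · simp
  · rw [if_neg (by omega), if_neg (by omega)]

lemma betaShift_iterate (k : ℕ) (B : Finset ℕ) :
    betaShift^[k] B = range k ∪ B.image (· + k) := by
  induction k with
  | zero => ext; simp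
  | succ k ih =>
    ext x
    rw [Function.iterate_succ_apply', ih, mem_betaShift]
    simp only [mem_union, mem_range, mem_image]
    constructor
    · rintro (rfl | ⟨hx, hx' | ⟨b, hb, hbx⟩⟩)
      · exact .inl (by omega)
      · exact .inl (by omega)
      · exact .inr ⟨b, hb, by omega⟩
    · rintro (hx | ⟨b, hb, rfl⟩)
      · rcases Nat.eq_zero_or_pos x with rfl | hx0
        · exact .inl rfl
        · exact .inr ⟨hx0, .inl (by omega)⟩
      · exact .inr ⟨by omega, .inr ⟨b, hb, by omega⟩⟩

lemma betaToPart_betaShift_iterate (k : ℕ) (B : Finset ℕ) :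
    betaToPart (betaShift^[k] B) = betaToPart B := by
  induction k with
  | zero => rfl
  | succ k ih => rw [Function.iterate_succ_apply', betaToPart_betaShift, ih]

lemma noEHook_betaShift {C : Finset ℕ} (hC : NoEHook e C) : NoEHook e (betaShift C) := by
  intro y hy hey
  rw [mem_betaShift] at hy ⊢
  rcases hy with rfl | ⟨hy0, hy⟩
  · exact .inl (by omega)
  · rcases Nat.lt_or_ge (y - 1) e with hlt | hle
    · exact .inl (by omega)
    · have := hC _ hy hle
      exact .inr ⟨by omega, by rwa [show y - e - 1 = y - 1 - e by omega]⟩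

lemma hookRel_betaShift {B B' : Finset ℕ} (h : hookRel e B B') :
    hookRel e (betaShift B) (betaShift B') := by
  obtain ⟨y, hy, hey, hnot, rfl⟩ := h
  refine ⟨y + 1, mem_betaShift.2 (.inr ⟨by omega, by simpa using hy⟩), by omega, ?_, ?_⟩
  · rw [mem_betaShift]
    rintro (h | ⟨_, h⟩)
    · omega
    · exact hnot (by rwa [show y + 1 - e - 1 = y - e by omega] at h)
  · ext x
    simp only [mem_insert, mem_erase, mem_betaShift]
    constructor
    · rintro (rfl | ⟨hx, hxy | ⟨hxy, hxB⟩⟩)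
      · exact .inr ⟨by omega, .inl rfl⟩
      · exact .inl (by omega)
      · exact .inr ⟨by omega, .inr ⟨hx, hxB⟩⟩
    · rintro (hxy | ⟨hxy, rfl | ⟨hx, hxB⟩⟩)
      · exact .inr ⟨by omega, .inl (by omega)⟩
      · exact .inl rfl
      · exact .inr ⟨hx, .inr ⟨by omega, hxB⟩⟩

lemma eCore_betaShift (he : 0 < e) (B : Finset ℕ) :
    eCore e (betaShift B) = betaShift (eCore e B) :=
  eCore_eq_of_reflTransGen he
    (Relation.ReflTransGen.lift betaShift (fun _ _ => hookRel_betaShift) _ _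
      (reflTransGen_hookRel_eCore he B))
    (noEHook_betaShift (noEHook_coreOfRunnerCounts he _))

lemma eCore_betaShift_iterate (he : 0 < e) (k : ℕ) (B : Finset ℕ) :
    eCore e (betaShift^[k] B) = betaShift^[k] (eCore e B) := by
  induction k with
  | zero => rfl
  | succ k ih => rw [Function.iterate_succ_apply', Function.iterate_succ_apply',
      eCore_betaShift he, ih]

lemma runnerCount_union_of_card_filter_eq_one {B T : Finset ℕ} (hBT : Disjoint B T) {i : ℕ}
    (hT : #(T.filter (· % e = i)) = 1) : runnerCount e (B ∪ T) i = runnerCount e B i + 1 := by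
  rw [runnerCount, filter_union, card_union_of_disjoint (disjoint_filter_filter hBT), hT,
    runnerCount]

lemma card_filter_mod_image_range_eq_one (he : 0 < e) {f : ℕ → ℕ}
    (hf : ∀ l < e, ∀ l' < e, f l % e = f l' % e → l = l') {i : ℕ} (hi : i < e) :
    #(((range e).image f).filter (· % e = i)) = 1 := by
  obtain ⟨l, hl, hli⟩ := surj_on_of_inj_on_of_card_le (s := range e) (t := range e)
    (fun l _ => f l % e) (fun l _ => mem_range.2 (Nat.mod_lt _ he))
    (fun l l' hl hl' => hf l (mem_range.1 hl) l' (mem_range.1 hl')) le_rfl i (mem_range.2 hi)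
  rw [filter_image, card_image_of_injOn fun a ha b hb hab =>
      hf a (mem_range.1 (mem_filter.1 ha).1) b (mem_range.1 (mem_filter.1 hb).1)
        (congrArg (· % e) hab),
    card_eq_one]
  refine ⟨l, eq_singleton_iff_unique_mem.2 ⟨mem_filter.2 ⟨hl, hli.symm⟩, fun l' hl' => ?_⟩⟩
  obtain ⟨hl', hl'i⟩ := mem_filter.1 hl'
  exact hf l' (mem_range.1 hl') l (mem_range.1 hl) (hl'i.trans hli)

lemma runnerCount_betaShift_iterate_self (he : 0 < e) (B : Finset ℕ) {i : ℕ} (hi : i < e) :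
    runnerCount e (betaShift^[e] B) i = runnerCount e B i + 1 := by
  have hdisj : Disjoint (B.image (· + e)) (range e) :=
    disjoint_left.2 fun x hx hx' => by
      obtain ⟨b, _, rfl⟩ := mem_image.1 hx
      simp at hx'
  have hfilter : (B.image (· + e)).filter (· % e = i) = (B.filter (· % e = i)).image (· + e) := by
    rw [filter_image]
    simp [Nat.add_mod_right]
  rw [betaShift_iterate, union_comm, runnerCount_union_of_card_filter_eq_one hdisj, runnerCount,
    hfilter, card_image_of_injective _ (add_left_injective e), runnerCount]
  simpa using card_filter_mod_image_range_eq_one he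
    (f := id) (fun l hl l' hl' h => by simpa [Nat.mod_eq_of_lt hl, Nat.mod_eq_of_lt hl'] using h) hi

lemma eCore_eq_betaShift_iterate (he : 0 < e) {B B' : Finset ℕ}
    (h : ∀ i < e, runnerCount e B i = runnerCount e B' i + 1) :
    eCore e B = betaShift^[e] (eCore e B') := by
  rw [← eCore_betaShift_iterate he]
  exact coreOfRunnerCounts_congr he fun i hi => by
    rw [h i hi, runnerCount_betaShift_iterate_self he B' hi]

end Shift

section Staircase

def HasStairCore (e : ℕ) (B : Finset ℕ) : Prop := ∃ s, betaToPart (eCore e B) = stair s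

lemma hasStairCore_betaShift_iterate_iff (he : 0 < e) (k : ℕ) (B : Finset ℕ) :
    HasStairCore e (betaShift^[k] B) ↔ HasStairCore e B := by
  rw [HasStairCore, HasStairCore, eCore_betaShift_iterate he, betaToPart_betaShift_iterate]

lemma hasStairCore_iff_of_runnerCount_eq_add_one (he : 0 < e) {B B' : Finset ℕ}
    (h : ∀ i < e, runnerCount e B i = runnerCount e B' i + 1) :
    HasStairCore e B ↔ HasStairCore e B' := by
  rw [HasStairCore, HasStairCore, eCore_eq_betaShift_iterate he h, betaToPart_betaShift_iterate]

lemma noEHook_of_forall_lt {C : Finset ℕ} (h : ∀ y ∈ C, y < e) : NoEHook e C :=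
  fun y hy hey => absurd (h y hy) (by omega)

def stairBetaSet (m : ℕ) : Finset ℕ := (range (m + 1)).image (2 * ·)

lemma mem_stairBetaSet {m x : ℕ} : x ∈ stairBetaSet m ↔ x % 2 = 0 ∧ x ≤ 2 * m := by
  simp only [stairBetaSet, mem_image, mem_range]
  constructor
  · rintro ⟨j, hj, rfl⟩
    omega
  · exact fun h => ⟨x / 2, by omega, by omega⟩

lemma betaToPart_stairBetaSet (m : ℕ) : betaToPart (stairBetaSet m) = stair m := by
  have hcard : #(stairBetaSet m) = m + 1 := by
    rw [stairBetaSet, card_image_of_injective _ fun a b h => by simpa using h, card_range]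
  funext j
  rw [betaToPart, hcard, stairBetaSet, sort_image_of_strictMono fun a b h => by omega, sort_range,
    stair]
  split_ifs with hj
  · rw [List.getD_eq_getElem _ _ (by simp), List.getElem_map, List.getElem_range]
    omega
  · omega

lemma eq_of_two_mul_modEq (he : Odd e) {l l' : ℕ} (hl : l < e) (hl' : l' < e)
    (h : 2 * l ≡ 2 * l' [MOD e]) : l = l' :=
  (Nat.ModEq.cancel_left_of_coprime (Nat.coprime_two_right.2 he) h).eq_of_lt_of_lt hl hl'

lemma runnerCount_stairBetaSet_of_le (he : Odd e) {m : ℕ} (hm : e ≤ m) {i : ℕ} (hi : i < e) :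
    runnerCount e (stairBetaSet m) i = runnerCount e (stairBetaSet (m - e)) i + 1 := by
  have hsplit : stairBetaSet m =
      stairBetaSet (m - e) ∪ (range e).image fun l => 2 * (m - e + 1 + l) := by
    ext x
    simp only [mem_union, mem_stairBetaSet, mem_image, mem_range]
    constructor
    · intro hx
      by_cases hxm : x ≤ 2 * (m - e)
      · exact .inl ⟨hx.1, hxm⟩
      · exact .inr ⟨x / 2 - (m - e + 1), by omega, by omega⟩
    · rintro (hx | ⟨l, hl, rfl⟩) <;> omega
  have hdisj : Disjoint (stairBetaSet (m - e)) ((range e).image fun l => 2 * (m - e + 1 + l)) :=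
    disjoint_left.2 fun x hx hx' => by
      obtain ⟨l, _, rfl⟩ := mem_image.1 hx'
      rw [mem_stairBetaSet] at hx
      omega
  rw [hsplit, runnerCount_union_of_card_filter_eq_one hdisj]
  refine card_filter_mod_image_range_eq_one he.pos (fun l hl l' hl' h => ?_) hi
  simp only [mul_add] at h
  exact eq_of_two_mul_modEq he hl hl' (Nat.ModEq.add_left_cancel' _ h)

/-- For `e ≤ 2m < 2e` the beads `e + 1, e + 3, …, 2m` of `Δ_m` slide down by `e` onto
`1, 3, …, 2m - e`; the result has no `e`-hook and is a shifted `Δ_{e-1-m}`. -/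
lemma hasStairCore_stairBetaSet_of_lt (he : Odd e) {m : ℕ} (hm : e ≤ 2 * m) (hme : m < e) :
    HasStairCore e (stairBetaSet m) := by
  obtain ⟨k, rfl⟩ := he
  set D : ℕ → Finset ℕ := fun r => (range (2 * m + 1)).filter fun x =>
    x % 2 = 0 ∧ ¬(2 * k + 1 < x ∧ x ≤ 2 * k + 1 + 2 * r) ∨ x % 2 = 1 ∧ x < 2 * r
  have hmem : ∀ r x, x ∈ D r ↔ x < 2 * m + 1 ∧
      (x % 2 = 0 ∧ ¬(2 * k + 1 < x ∧ x ≤ 2 * k + 1 + 2 * r) ∨ x % 2 = 1 ∧ x < 2 * r) :=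
    fun r x => by simp only [D, mem_filter, mem_range]
  have hpath : ∀ r ≤ m - k, Relation.ReflTransGen (hookRel (2 * k + 1)) (D 0) (D r) := by
    intro r
    induction r with
    | zero => exact fun _ => .refl
    | succ r ih =>
      refine fun hr => (ih (by omega)).tail ⟨2 * k + 2 + 2 * r, ?_, by omega, ?_, ?_⟩
      · rw [hmem]; omega
      · rw [hmem]; omega
      · ext x
        simp only [mem_insert, mem_erase, hmem]
        omega
  have hstart : D 0 = stairBetaSet m := by
    ext x
    rw [hmem, mem_stairBetaSet]
    omega
  have hend : D (m - k) = betaShift^[2 * m - 2 * k] (stairBetaSet (2 * k - m)) := by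
    ext x
    simp only [hmem, betaShift_iterate, mem_union, mem_range, mem_image, mem_stairBetaSet]
    constructor
    · intro hx
      by_cases hxs : x < 2 * m - 2 * k
      · exact .inl hxs
      · exact .inr ⟨x - (2 * m - 2 * k), by omega, by omega⟩
    · rintro (hx | ⟨y, hy, rfl⟩) <;> omega
  have hcore : eCore (2 * k + 1) (stairBetaSet m) = D (m - k) := by
    refine eCore_eq_of_reflTransGen (by omega) (hstart ▸ hpath _ le_rfl) ?_
    exact noEHook_of_forall_lt fun y hy => by rw [hmem] at hy; omega
  exact ⟨2 * k - m, by rw [hcore, hend, betaToPart_betaShift_iterate, betaToPart_stairBetaSet]⟩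

lemma hasStairCore_stairBetaSet (he : Odd e) (m : ℕ) : HasStairCore e (stairBetaSet m) := by
  induction m using Nat.strong_induction_on with
  | _ m ih =>
    rcases Nat.lt_or_ge (2 * m) e with hlt | hle
    · have hno : NoEHook e (stairBetaSet m) :=
        noEHook_of_forall_lt fun y hy => by rw [mem_stairBetaSet] at hy; omega
      exact ⟨m, by rw [eCore_eq_self he.pos hno, betaToPart_stairBetaSet]⟩
    rcases Nat.lt_or_ge m e with hme | hem
    · exact hasStairCore_stairBetaSet_of_lt he hle hme
    · rw [hasStairCore_iff_of_runnerCount_eq_add_one he.pos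
        fun i hi => runnerCount_stairBetaSet_of_le he hem hi]
      exact ih (m - e) (by have := he.pos; omega)

end Staircase

section Abacus

variable {A : Set ℤ} {N : ℤ}

/-- The β-set `{b | N + b ∈ A}` of the abacus `A` read from position `N` on (junk value `∅` when
that set is infinite). -/
noncomputable def betaSetAt (A : Set ℤ) (N : ℤ) : Finset ℕ :=
  open Classical in if h : {b : ℕ | N + b ∈ A}.Finite then h.toFinset else ∅

lemma finite_setOf_add_mem (hA : BddAbove A) (N : ℤ) : {b : ℕ | N + b ∈ A}.Finite := by
  obtain ⟨U, hU⟩ := hA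
  refine (Set.finite_lt_nat ((U - N).toNat + 1)).subset fun b hb => ?_
  have := hU hb
  simp only [Set.mem_ofPred_eq]
  omega

lemma mem_betaSetAt (hA : BddAbove A) {b : ℕ} : b ∈ betaSetAt A N ↔ N + b ∈ A := by
  rw [betaSetAt, dif_pos (finite_setOf_add_mem hA N), Set.Finite.mem_toFinset, Set.mem_ofPred_eq]

lemma betaSetAt_sub_one (hN : Set.Iio N ⊆ A) (hA : BddAbove A) :
    betaSetAt A (N - 1) = betaShift (betaSetAt A N) := by
  ext b
  rw [mem_betaSetAt hA, mem_betaShift, mem_betaSetAt hA]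
  rcases Nat.eq_zero_or_pos b with rfl | hb
  · simpa using hN (show N - 1 < N by omega)
  · rw [show N - 1 + (b : ℤ) = N + ((b - 1 : ℕ) : ℤ) by omega]
    simp [hb, hb.ne']

lemma betaSetAt_sub (hN : Set.Iio N ⊆ A) (hA : BddAbove A) (d : ℕ) :
    betaSetAt A (N - d) = betaShift^[d] (betaSetAt A N) := by
  induction d with
  | zero => simp
  | succ d ih =>
    have hNd : Set.Iio (N - d) ⊆ A := fun x hx => hN (by simp only [Set.mem_Iio] at hx ⊢; omega)
    rw [Function.iterate_succ_apply', ← ih, ← betaSetAt_sub_one hNd hA]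
    push_cast
    ring_nf

lemma hasStairCore_betaSetAt_iff (he : 0 < e) {N' : ℤ} (hN : Set.Iio N ⊆ A)
    (hN' : Set.Iio N' ⊆ A) (hA : BddAbove A) :
    HasStairCore e (betaSetAt A N) ↔ HasStairCore e (betaSetAt A N') := by
  rcases le_total N N' with h | h
  · rw [show N = N' - (N' - N).toNat by omega, betaSetAt_sub hN' hA,
      hasStairCore_betaShift_iterate_iff he]
  · rw [show N' = N - (N - N').toNat by omega, betaSetAt_sub hN hA,
      hasStairCore_betaShift_iterate_iff he]

lemma ncard_setOf_mem_gt (hN : Set.Iio N ⊆ A) (hA : BddAbove A) (x : ℤ) :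
    {y | y ∈ A ∧ x < y}.ncard =
      (N - 1 - x).toNat + #((betaSetAt A N).filter fun c : ℕ => x < N + c) := by
  set T := (betaSetAt A N).filter fun c : ℕ => x < N + c
  have hset : {y | y ∈ A ∧ x < y} = Set.Ico (x + 1) N ∪ (fun c : ℕ => N + c) '' T := by
    ext y
    simp only [T, Set.mem_ofPred_eq, Set.mem_union, Set.mem_Ico, Set.mem_image, coe_filter,
      mem_betaSetAt hA]
    constructor
    · rintro ⟨hy, hxy⟩
      rcases lt_or_ge y N with hyN | hyN
      · exact .inl ⟨by omega, hyN⟩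
      · exact .inr ⟨(y - N).toNat, by rw [Int.toNat_of_nonneg (by omega)]; simp [hy, hxy]⟩
    · rintro (⟨hxy, hyN⟩ | ⟨c, ⟨hc, hxc⟩, rfl⟩)
      · exact ⟨hN hyN, by omega⟩
      · exact ⟨hc, hxc⟩
  have hdisj : Disjoint (Set.Ico (x + 1) N) ((fun c : ℕ => N + c) '' T) :=
    Set.disjoint_left.2 fun y hy hy' => by
      obtain ⟨c, _, rfl⟩ := hy'
      simp only [Set.mem_Ico] at hy
      omega
  rw [hset, Set.ncard_union_eq hdisj (Set.finite_Ico _ _) (Set.toFinite _),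
    Set.ncard_image_of_injective _ fun a b h => by simpa using h,
    Set.ncard_coe_finset, ← coe_Ico, Set.ncard_coe_finset, Int.card_Ico]
  congr 1
  omega

lemma ncard_setOf_lt_notMem (hN : Set.Iio N ⊆ A) (hA : BddAbove A) (x : ℤ) :
    {y | y < x ∧ y ∉ A}.ncard =
      (x - N).toNat - #((betaSetAt A N).filter fun c : ℕ => N + c < x) := by
  set T := (betaSetAt A N).filter fun c : ℕ => N + c < x
  have hsub : (fun c : ℕ => N + c) '' T ⊆ Set.Ico N x := by
    rintro _ ⟨c, hc, rfl⟩
    exact ⟨by simp, (mem_filter.1 hc).2⟩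
  have hset : {y | y < x ∧ y ∉ A} = Set.Ico N x \ (fun c : ℕ => N + c) '' T := by
    ext y
    simp only [T, Set.mem_ofPred_eq, Set.mem_sdiff, Set.mem_Ico, Set.mem_image, mem_coe,
      mem_filter]
    constructor
    · rintro ⟨hyx, hyA⟩
      refine ⟨⟨not_lt.1 fun hyN => hyA (hN hyN), hyx⟩, ?_⟩
      rintro ⟨c, ⟨hc, _⟩, rfl⟩
      exact hyA ((mem_betaSetAt hA).1 hc)
    · rintro ⟨⟨hNy, hyx⟩, hy⟩
      refine ⟨hyx, fun hyA => hy ⟨(y - N).toNat, ⟨(mem_betaSetAt hA).2 ?_, ?_⟩, ?_⟩⟩ <;>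
        rw [Int.toNat_of_nonneg (by omega)] <;> simp [hyA, hyx]
  rw [hset, Set.ncard_sdiff hsub (Set.toFinite _),
    Set.ncard_image_of_injective _ fun a b h => by simpa using h,
    Set.ncard_coe_finset, ← coe_Ico, Set.ncard_coe_finset, Int.card_Ico]

/-- On the beads of `A`, the number of beads above is strictly decreasing, so it identifies the
bead. -/
lemma abacusBead_ncard (hA : BddAbove A) {x : ℤ} (hx : x ∈ A) :
    abacusBead A {y | y ∈ A ∧ x < y}.ncard = x := by
  have hfin : ∀ x, {y | y ∈ A ∧ x < y}.Finite := fun x => by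
    obtain ⟨U, hU⟩ := hA
    exact (Set.finite_Ioc x U).subset fun y hy => ⟨hy.2, hU hy.1⟩
  have hlt : ∀ x x', x' ∈ A → x < x' →
      {y | y ∈ A ∧ x' < y}.ncard < {y | y ∈ A ∧ x < y}.ncard := by
    intro x x' hx' hxx'
    have hsub : {y | y ∈ A ∧ x' < y} ⊆ {y | y ∈ A ∧ x < y} := fun y hy => ⟨hy.1, hxx'.trans hy.2⟩
    exact Set.ncard_lt_ncard ((Set.ssubset_iff_of_subset hsub).2
      ⟨x', ⟨hx', hxx'⟩, fun h => lt_irrefl _ h.2⟩) (hfin x)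
  have hset : {x' | x' ∈ A ∧ {y | y ∈ A ∧ x' < y}.ncard = {y | y ∈ A ∧ x < y}.ncard} = {x} := by
    ext x'
    constructor
    · rintro ⟨hx'A, hcount⟩
      rcases lt_trichotomy x x' with h | h | h
      · exact absurd hcount (hlt x x' hx'A h).ne
      · exact h.symm
      · exact absurd hcount (hlt x' x hx h).ne'
    · rintro rfl
      exact ⟨hx, rfl⟩
  rw [abacusBead, hset, csSup_singleton]

lemma betaToPart_betaSetAt (hN : Set.Iio N ⊆ A) (hA : BddAbove A) :
    betaToPart (betaSetAt A N) = abacusPartition A := by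
  set B := betaSetAt A N with hB
  funext j
  rw [betaToPart, abacusPartition]
  split_ifs with hj
  · set i : Fin #B := ⟨#B - 1 - j, by omega⟩
    set b := B.orderEmbOfFin rfl i
    have hb : (B.sort (· ≤ ·)).getD (#B - 1 - j) 0 = b := by
      rw [List.getD_eq_getElem _ _ (by simp; omega)]
      exact (orderEmbOfFin_apply B rfl i).symm
    have hbA : N + b ∈ A := (mem_betaSetAt hA).1 (orderEmbOfFin_mem B rfl i)
    have habove : {y | y ∈ A ∧ N + b < y}.ncard = j := by
      rw [ncard_setOf_mem_gt hN hA, filter_congr (q := (b < ·)) fun c _ => by simp,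
        filter_gt_orderEmbOfFin, card_map, Fin.card_Ioi]
      simp only [i]
      omega
    rw [hb, ← habove, abacusBead_ncard hA hbA, habove, ncard_setOf_lt_notMem hN hA,
      filter_congr (q := (· < b)) fun c _ => by simp, filter_lt_orderEmbOfFin, card_map,
      Fin.card_Iio]
    simp [i]
  · set x := N - 1 - (j - #B : ℕ)
    have habove : {y | y ∈ A ∧ x < y}.ncard = j := by
      rw [ncard_setOf_mem_gt hN hA, filter_true_of_mem fun c _ => by omega, ← hB]
      omega
    rw [← habove, abacusBead_ncard hA (hN (by simp only [Set.mem_Iio]; omega)),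
      ncard_setOf_lt_notMem hN hA]
    omega

end Abacus

section Symbol

variable {B1 B2 : Set ℤ}

lemma mem_abacusE (he : Odd e) {x : ℤ} :
    x ∈ abacusE e B1 B2 ↔ x % 2 = 1 ∧ (x - e) / 2 ∈ B1 ∨ x % 2 = 0 ∧ x / 2 ∈ B2 := by
  obtain ⟨k, rfl⟩ := he
  simp only [abacusE, Set.mem_union, Set.mem_ofPred_eq]
  push_cast
  constructor
  · rintro (⟨j, hj, rfl⟩ | ⟨j, hj, rfl⟩)
    · exact .inl ⟨by omega, by rwa [show (2 * j + (2 * k + 1) - (2 * k + 1)) / 2 = j by omega]⟩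
    · exact .inr ⟨by omega, by rwa [show 2 * j / 2 = j by omega]⟩
  · rintro (⟨hx, hB⟩ | ⟨hx, hB⟩)
    · exact .inl ⟨_, hB, by omega⟩
    · exact .inr ⟨_, hB, by omega⟩

lemma bddAbove_abacusE (h1 : BddAbove B1) (h2 : BddAbove B2) : BddAbove (abacusE e B1 B2) := by
  obtain ⟨U1, hU1⟩ := h1
  obtain ⟨U2, hU2⟩ := h2
  refine ⟨max (2 * U1 + e) (2 * U2), ?_⟩
  rintro _ (⟨j, hj, rfl⟩ | ⟨j, hj, rfl⟩)
  · have := hU1 hj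
    exact le_max_of_le_left (by omega)
  · have := hU2 hj
    exact le_max_of_le_right (by omega)

lemma hasStairCore_abacusE_Iic (he : Odd e) (c1 c2 : ℤ) {N : ℤ}
    (hN : Set.Iio N ⊆ abacusE e (Set.Iic c1) (Set.Iic c2)) :
    HasStairCore e (betaSetAt (abacusE e (Set.Iic c1) (Set.Iic c2)) N) := by
  have hmem : ∀ x, x ∈ abacusE e (Set.Iic c1) (Set.Iic c2) ↔
      x % 2 = 1 ∧ x ≤ 2 * c1 + e ∨ x % 2 = 0 ∧ x ≤ 2 * c2 := fun x => by
    rw [mem_abacusE he, Set.mem_Iic, Set.mem_Iic]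
    obtain ⟨k, rfl⟩ := he
    push_cast
    omega
  have hA : BddAbove (abacusE e (Set.Iic c1) (Set.Iic c2)) :=
    bddAbove_abacusE bddAbove_Iic bddAbove_Iic
  set N₀ := min (2 * c1 + e) (2 * c2) + 1
  have hN₀ : Set.Iio N₀ ⊆ abacusE e (Set.Iic c1) (Set.Iic c2) := fun x hx => by
    rw [hmem]
    simp only [Set.mem_Iio, N₀] at hx
    obtain ⟨k, rfl⟩ := he
    push_cast at hx ⊢
    omega
  have hstair : betaSetAt (abacusE e (Set.Iic c1) (Set.Iic c2)) N₀ =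
      stairBetaSet ((max (2 * c1 + e) (2 * c2) - N₀) / 2).toNat := by
    ext c
    rw [mem_betaSetAt hA, hmem, mem_stairBetaSet]
    obtain ⟨k, rfl⟩ := he
    simp only [N₀]
    push_cast
    omega
  rw [hasStairCore_betaSetAt_iff he.pos hN hN₀ hA, hstair]
  exact hasStairCore_stairBetaSet he _

/-- The position in `abacusE e B1 B2` of the entry `M - l` of the `e`-period with largest
entry `M`; the entry is read in the first row whenever it lies there. -/
noncomputable def periodBead (e : ℕ) (B1 : Set ℤ) (M : ℤ) (l : ℕ) : ℤ :=
  open Classical in if M - l ∈ B1 then 2 * (M - l) + e else 2 * (M - l)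

noncomputable def periodBeads (e : ℕ) (B1 : Set ℤ) (M : ℤ) : Finset ℤ :=
  (range e).image (periodBead e B1 M)

lemma periodBead_mem_abacusE {M : ℤ} (hper : ∀ l : ℕ, l < e → M - l ∈ B1 ∪ B2) {l : ℕ}
    (hl : l < e) : periodBead e B1 M l ∈ abacusE e B1 B2 := by
  unfold periodBead
  split_ifs with h
  · exact .inl ⟨_, h, rfl⟩
  · exact .inr ⟨_, (hper l hl).resolve_left h, rfl⟩

lemma two_mul_sub_lt_periodBead (M : ℤ) {l : ℕ} (hl : l < e) :
    2 * M - 2 * e < periodBead e B1 M l := by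
  unfold periodBead
  split_ifs <;> omega

lemma mem_periodBeads (he : Odd e) {M z : ℤ} :
    z ∈ periodBeads e B1 M ↔
      z % 2 = 1 ∧ (z - e) / 2 ∈ Set.Ioc (M - e) M ∧ (z - e) / 2 ∈ B1 ∨
      z % 2 = 0 ∧ z / 2 ∈ Set.Ioc (M - e) M ∧ z / 2 ∉ B1 := by
  obtain ⟨k, rfl⟩ := he
  simp only [periodBeads, mem_image, mem_range, periodBead, Set.mem_Ioc]
  push_cast
  constructor
  · rintro ⟨l, hl, rfl⟩
    split_ifs with h
    · exact .inl ⟨by omega, by omega, by rwa [show (2 * (M - l) + (2 * k + 1) - (2 * k + 1)) / 2 =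
        M - l by omega]⟩
    · exact .inr ⟨by omega, by omega, by rwa [show 2 * (M - l) / 2 = M - l by omega]⟩
  · rintro (⟨hz, hIoc, hB⟩ | ⟨hz, hIoc, hB⟩)
    · refine ⟨(M - (z - (2 * k + 1)) / 2).toNat, by omega, ?_⟩
      rw [if_pos (by rwa [show M - ((M - (z - (2 * k + 1)) / 2).toNat : ℕ) = (z - (2 * k + 1)) / 2
        by omega])]
      omega
    · refine ⟨(M - z / 2).toNat, by omega, ?_⟩
      rw [if_neg (by rwa [show M - ((M - z / 2).toNat : ℕ) = z / 2 by omega])]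
      omega

lemma abacusE_removePeriod (he : Odd e) (M : ℤ) :
    abacusE e (B1 \ Set.Ioc (M - e) M) (B2 \ (Set.Ioc (M - e) M \ B1)) =
      abacusE e B1 B2 \ periodBeads e B1 M := by
  ext z
  rw [Set.mem_sdiff, mem_abacusE he, mem_abacusE he, mem_coe, mem_periodBeads he]
  simp only [Set.mem_sdiff]
  rcases Int.emod_two_eq_zero_or_one z with h | h <;>
    simp only [h, zero_ne_one, one_ne_zero, true_and, false_and, or_false, false_or]
  tauto

lemma periodBead_modEq (M : ℤ) (l : ℕ) : periodBead e B1 M l ≡ 2 * (M - l) [ZMOD e] := by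
  unfold periodBead
  split_ifs
  exacts [Int.add_modEq_right, .refl _]

lemma eq_of_periodBead_modEq (he : Odd e) {M : ℤ} {l l' : ℕ} (hl : l < e) (hl' : l' < e)
    (h : periodBead e B1 M l ≡ periodBead e B1 M l' [ZMOD e]) : l = l' := by
  have h2 := (((periodBead_modEq M l).symm.trans h).trans (periodBead_modEq M l')).sub_left (2 * M)
  refine eq_of_two_mul_modEq he hl hl' (Int.natCast_modEq_iff.1 ?_)
  convert h2 using 1 <;> push_cast <;> ring

lemma betaSetAt_union_of_le {A : Set ℤ} {N : ℤ} (hA : BddAbove A) {P : Finset ℤ}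
    (hP : ∀ z ∈ P, N ≤ z) :
    betaSetAt (A ∪ P) N = betaSetAt A N ∪ P.image fun z => (z - N).toNat := by
  ext c
  rw [mem_betaSetAt (hA.union P.bddAbove), mem_union, mem_betaSetAt hA, Set.mem_union, mem_coe,
    mem_image]
  refine or_congr_right ⟨fun hc => ⟨_, hc, by omega⟩, ?_⟩
  rintro ⟨z, hz, rfl⟩
  rwa [Int.toNat_of_nonneg (by linarith [hP z hz]), add_sub_cancel]

/-- `periodBead l ≡ 2 (M - l) [ZMOD e]` and `2` is invertible modulo the odd number `e`, so the `e`
beads of a period lie on distinct runners. -/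
lemma card_filter_mod_image_periodBeads (he : Odd e) {M N : ℤ} (hN : N ≤ 2 * M - 2 * e) {i : ℕ}
    (hi : i < e) :
    #(((periodBeads e B1 M).image fun z => (z - N).toNat).filter (· % e = i)) = 1 := by
  rw [periodBeads, image_image]
  refine card_filter_mod_image_range_eq_one he.pos (fun l hl l' hl' h => ?_) hi
  have hnn : ∀ l < e, 0 ≤ periodBead e B1 M l - N := fun l hl => by
    linarith [two_mul_sub_lt_periodBead (B1 := B1) M hl]
  have := Int.natCast_modEq_iff.2 h
  simp only [Function.comp_apply, Int.toNat_of_nonneg (hnn l hl),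
    Int.toNat_of_nonneg (hnn l' hl')] at this
  exact eq_of_periodBead_modEq he hl hl' (this.add_right_cancel' (-N))

lemma runnerCount_betaSetAt_abacusE_removePeriod (he : Odd e) {M N : ℤ}
    (hper : ∀ l : ℕ, l < e → M - l ∈ B1 ∪ B2) (hA : BddAbove (abacusE e B1 B2))
    (hN : N ≤ 2 * M - 2 * e) {i : ℕ} (hi : i < e) :
    runnerCount e (betaSetAt (abacusE e B1 B2) N) i =
      runnerCount e (betaSetAt (abacusE e (B1 \ Set.Ioc (M - e) M)
        (B2 \ (Set.Ioc (M - e) M \ B1))) N) i + 1 := by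
  set A' := abacusE e (B1 \ Set.Ioc (M - e) M) (B2 \ (Set.Ioc (M - e) M \ B1))
  have hPN : ∀ z ∈ periodBeads e B1 M, N ≤ z := by
    simp only [periodBeads, mem_image, mem_range]
    rintro _ ⟨l, hl, rfl⟩
    linarith [two_mul_sub_lt_periodBead (B1 := B1) M hl]
  have hPA : ↑(periodBeads e B1 M) ⊆ abacusE e B1 B2 := by
    simp only [periodBeads, coe_image, coe_range, Set.image_subset_iff]
    exact fun l hl => periodBead_mem_abacusE hper hl
  have hA' : A' = abacusE e B1 B2 \ periodBeads e B1 M := abacusE_removePeriod he M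
  have hA'bdd : BddAbove A' := hA.mono (by rw [hA']; exact Set.sdiff_subset)
  have hdisj : Disjoint (betaSetAt A' N) ((periodBeads e B1 M).image fun z => (z - N).toNat) := by
    refine disjoint_left.2 fun c hc hc' => ?_
    obtain ⟨z, hz, rfl⟩ := mem_image.1 hc'
    rw [mem_betaSetAt hA'bdd, hA', Int.toNat_of_nonneg (by linarith [hPN z hz]),
      add_sub_cancel] at hc
    exact hc.2 hz
  rw [← Set.sdiff_union_of_subset hPA, ← hA', betaSetAt_union_of_le hA'bdd hPN,
    runnerCount_union_of_card_filter_eq_one hdisj (card_filter_mod_image_periodBeads he hN hi)]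

lemma Iio_subset_abacusE (he : Odd e) {c1 c2 : ℤ} (h1 : Set.Iic c1 ⊆ B1)
    (h2 : Set.Iic c2 ⊆ B2) : Set.Iio (min (2 * c1 + e) (2 * c2)) ⊆ abacusE e B1 B2 := by
  intro x hx
  simp only [Set.mem_Iio, lt_min_iff] at hx
  rw [mem_abacusE he]
  rcases Int.emod_two_eq_zero_or_one x with hx2 | hx2
  · exact .inr ⟨hx2, h2 (by simp only [Set.mem_Iic]; omega)⟩
  · obtain ⟨k, rfl⟩ := he
    push_cast at hx ⊢
    exact .inl ⟨hx2, h1 (by simp only [Set.mem_Iic]; omega)⟩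

end Symbol

end BetaSet

open BetaSet

namespace TotallyPeriodic

variable {e : ℕ} {B1 B2 : Set ℤ}

lemma bddAbove (h : TotallyPeriodic e B1 B2) : BddAbove B1 ∧ BddAbove B2 := by
  cases h with
  | base c1 c2 => exact ⟨bddAbove_Iic, bddAbove_Iic⟩
  | step _ _ M _ hub => exact ⟨⟨M, fun x hx => hub x (.inl hx)⟩, ⟨M, fun x hx => hub x (.inr hx)⟩⟩

lemma exists_Iic_subset (h : TotallyPeriodic e B1 B2) :
    (∃ c, Set.Iic c ⊆ B1) ∧ ∃ c, Set.Iic c ⊆ B2 := by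
  induction h with
  | base c1 c2 => exact ⟨⟨c1, subset_rfl⟩, ⟨c2, subset_rfl⟩⟩
  | step B1 B2 M _ _ _ _ _ ih =>
    obtain ⟨⟨c1, h1⟩, ⟨c2, h2⟩⟩ := ih
    exact ⟨⟨c1, h1.trans Set.sdiff_subset⟩, ⟨c2, h2.trans Set.sdiff_subset⟩⟩

lemma hasStairCore (he : Odd e) (h : TotallyPeriodic e B1 B2) {N : ℤ}
    (hN : Set.Iio N ⊆ abacusE e B1 B2) : HasStairCore e (betaSetAt (abacusE e B1 B2) N) := by
  induction h generalizing N with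
  | base c1 c2 => exact hasStairCore_abacusE_Iic he c1 c2 hN
  | step B1 B2 M _ hub hper _ _ ih =>
    have hA : BddAbove (abacusE e B1 B2) :=
      bddAbove_abacusE ⟨M, fun x hx => hub x (.inl hx)⟩ ⟨M, fun x hx => hub x (.inr hx)⟩
    set N₀ := min N (2 * M - 2 * e)
    have hN₀ : Set.Iio N₀ ⊆ abacusE e B1 B2 :=
      (Set.Iio_subset_Iio (min_le_left _ _)).trans hN
    have hN₀' : Set.Iio N₀ ⊆
        abacusE e (B1 \ Set.Ioc (M - e) M) (B2 \ (Set.Ioc (M - e) M \ B1)) := by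
      rw [abacusE_removePeriod he]
      intro x hx
      refine ⟨hN₀ hx, fun hxP => ?_⟩
      obtain ⟨l, hl, rfl⟩ := mem_image.1 (mem_coe.1 hxP)
      have := two_mul_sub_lt_periodBead (B1 := B1) M (mem_range.1 hl)
      simp only [Set.mem_Iio, N₀] at hx
      omega
    rw [hasStairCore_betaSetAt_iff he.pos hN hN₀ hA,
      hasStairCore_iff_of_runnerCount_eq_add_one he.pos fun i hi =>
        runnerCount_betaSetAt_abacusE_removePeriod he hper hA (min_le_right _ _) hi]
    exact ih hN₀'

end TotallyPeriodic

theorem stmt19_general (e t : ℕ) (he : Odd e) (μ : (ℕ → ℕ) × (ℕ → ℕ))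
    (htp : TotallyPeriodic e (symbolRow μ.1 ((t : ℤ) + (1 - (e : ℤ)) / 2))
      (symbolRow μ.2 0)) :
    ∃ (s : ℕ) (B : Finset ℕ),
      betaToPart B = abacusPartition (abacusE e
        (symbolRow μ.1 ((t : ℤ) + (1 - (e : ℤ)) / 2)) (symbolRow μ.2 0)) ∧
      HasECore e B (stair s) := by
  obtain ⟨⟨c1, h1⟩, ⟨c2, h2⟩⟩ := htp.exists_Iic_subset
  have hN := Iio_subset_abacusE he h1 h2
  have hA := bddAbove_abacusE (e := e) htp.bddAbove.1 htp.bddAbove.2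
  obtain ⟨s, hs⟩ := htp.hasStairCore he hN
  exact ⟨s, _, betaToPart_betaSetAt hN hA, hs ▸ hasECore_eCore he.pos _⟩

/-- Let `e ≥ 3` be odd, `t ≥ 0` and `c = (t + (1−e)/2, 0)`. If `μ` is a bipartition
whose symbol `𝔅(μ, c)` is totally `e`-periodic, then the `e`-core of the partition
`Φ_t(μ)` (realized as the partition associated to the abacus `𝔄_e(μ, c)`) is a
2-core, i.e. equals the staircase `Δ_s` for some `s ≥ 0`. -/
theorem stmt19 (e t : ℕ) (he : Odd e) (he3 : 3 ≤ e) (μ : (ℕ → ℕ) × (ℕ → ℕ))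
    (h1 : IsPartitionFun μ.1) (h2 : IsPartitionFun μ.2)
    (htp : TotallyPeriodic e (symbolRow μ.1 ((t : ℤ) + (1 - (e : ℤ)) / 2))
      (symbolRow μ.2 0)) :
    ∃ (s : ℕ) (B : Finset ℕ),
      betaToPart B = abacusPartition (abacusE e
        (symbolRow μ.1 ((t : ℤ) + (1 - (e : ℤ)) / 2)) (symbolRow μ.2 0)) ∧
      HasECore e B (stair s) :=
  stmt19_general e t he μ htp
end
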